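/- Suppose for each t > 0, φ_t(u) = ∫_0^∞ exp(Λ(t^α x)(e^{iu/Λ(t^α)} - 1)) h(x) dx where h is a probability density on (0,∞), Λ is nonnegative, measurable, Λ(s) → ∞ as s → ∞, and Λ(t^α x)/Λ(t^α) → x^β for all x > 0. Then φ_t(u) → ∫_0^∞ e^{iux^β} h(x) dx as t → ∞, for every u ∈ ℝ. -/

import Mathlib

/-!
With `N = Λ(t^α) → ∞`, the exponent is `(Λ(t^α x) / N) · N (e^{iu/N} - 1)`, whose first factor
tends to `x^β` and whose second tends to `iu` (the derivative of `s ↦ e^{ius}` at `0`). Since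
`Λ ≥ 0` and `Re (e^{iθ} - 1) ≤ 0`, the integrand is bounded by `|h|`, which is integrable because
its integral is `1 ≠ 0`; dominated convergence concludes.
-/

open Filter MeasureTheory Topology

theorem Complex.tendsto_mul_exp_div_sub_one (c : ℂ) :
    Tendsto (fun N : ℝ => (N : ℂ) * (exp (c / N) - 1)) atTop (𝓝 c) := by
  have hderiv : HasDerivAt (fun s : ℝ => exp (c * s)) c 0 := by
    simpa using ((hasDerivAt_id (0 : ℝ)).ofReal_comp.const_mul c).cexp
  refine (hderiv.tendsto_slope_zero_right.comp tendsto_inv_atTop_nhdsGT_zero).congr fun N => ?_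
  simp [div_eq_mul_inv]

theorem Complex.norm_exp_mul_exp_mul_I_sub_one_le_one {a : ℝ} (ha : 0 ≤ a) (θ : ℝ) :
    ‖exp (a * (exp (θ * I) - 1))‖ ≤ 1 := by
  rw [norm_exp, Real.exp_le_one_iff]
  simpa [mul_re] using mul_nonpos_of_nonneg_of_nonpos ha (sub_nonpos.mpr (Real.cos_le_one θ))

theorem Complex.tendsto_mul_exp_div_mul_I_sub_one {ι : Type*} {l : Filter ι} {a b : ι → ℝ}
    {r : ℝ} (ha : Tendsto a l atTop) (hba : Tendsto (fun i => b i / a i) l (𝓝 r)) (u : ℝ) :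
    Tendsto (fun i => (b i : ℂ) * (exp (u / a i * I) - 1)) l (𝓝 (u * r * I)) := by
  have hlim := ((continuous_ofReal.tendsto r).comp hba).mul
    ((tendsto_mul_exp_div_sub_one (u * I)).comp ha)
  rw [show (r : ℂ) * (u * I) = u * r * I by ring] at hlim
  refine hlim.congr' ?_
  filter_upwards [ha.eventually_gt_atTop 0] with i hi
  have : (a i : ℂ) ≠ 0 := ofReal_ne_zero.mpr hi.ne'
  simp only [Function.comp_apply, ofReal_div]
  field_simp

theorem fnpp_charFun_scaling_limit_general
    (α β u : ℝ) (hα : α ∈ Set.Ioo (0 : ℝ) 1)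
    (Λ : ℝ → ℝ) (hΛmeas : Measurable Λ) (hΛnn : ∀ s : ℝ, 0 ≤ Λ s)
    (hΛtop : Tendsto Λ atTop atTop)
    (hreg : ∀ x : ℝ, 0 < x →
      Tendsto (fun t : ℝ => Λ (t ^ α * x) / Λ (t ^ α)) atTop (nhds (x ^ β)))
    (h : ℝ → ℝ)
    (hh1 : ∫ x in Set.Ioi (0 : ℝ), h x = 1) :
    Tendsto
      (fun t : ℝ => ∫ x in Set.Ioi (0 : ℝ),
        Complex.exp ((Λ (t ^ α * x) : ℂ) *
          (Complex.exp ((u : ℂ) / (Λ (t ^ α) : ℂ) * Complex.I) - 1)) * (h x : ℂ))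
      atTop
      (nhds (∫ x in Set.Ioi (0 : ℝ),
        Complex.exp ((u : ℂ) * ((x ^ β : ℝ) : ℂ) * Complex.I) * (h x : ℂ))) := by
  have hint : Integrable h (volume.restrict (Set.Ioi 0)) :=
    Integrable.of_integral_ne_zero (by simp [hh1])
  have hΛscale : Tendsto (fun t : ℝ => Λ (t ^ α)) atTop atTop :=
    hΛtop.comp (tendsto_rpow_atTop hα.1)
  refine tendsto_integral_filter_of_dominated_convergence (fun x => ‖h x‖)
    (Eventually.of_forall fun t => ?_) (Eventually.of_forall fun t => ?_) hint.norm ?_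
  · exact (by fun_prop : Measurable _).aestronglyMeasurable.mul
      (Complex.continuous_ofReal.comp_aestronglyMeasurable hint.aestronglyMeasurable)
  · refine Eventually.of_forall fun x => ?_
    rw [norm_mul, Complex.norm_real, ← Complex.ofReal_div]
    exact mul_le_of_le_one_left (norm_nonneg _)
      (Complex.norm_exp_mul_exp_mul_I_sub_one_le_one (hΛnn _) _)
  · refine (ae_restrict_iff' measurableSet_Ioi).mpr (Eventually.of_forall fun x hx => ?_)
    have hlim := Complex.tendsto_mul_exp_div_mul_I_sub_one hΛscale (hreg x hx) u
    exact ((Complex.continuous_exp.tendsto _).comp hlim).mul_const (h x : ℂ)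

/-- Dominated-convergence step in the scaling limit for the FNPP: if `Λ` is nonnegative,
measurable, `Λ(s) → ∞` as `s → ∞`, and `Λ(t^α x)/Λ(t^α) → x^β` for all `x > 0`, and `h`
is a probability density on `(0,∞)`, then
`φ_t(u) = ∫_0^∞ exp(Λ(t^α x)(e^{iu/Λ(t^α)} - 1)) h(x) dx → ∫_0^∞ e^{iux^β} h(x) dx`. -/
theorem fnpp_charFun_scaling_limit
    (α β u : ℝ) (hα : α ∈ Set.Ioo (0 : ℝ) 1)
    (Λ : ℝ → ℝ) (hΛmeas : Measurable Λ) (hΛnn : ∀ s : ℝ, 0 ≤ Λ s)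
    (hΛtop : Tendsto Λ atTop atTop)
    (hreg : ∀ x : ℝ, 0 < x →
      Tendsto (fun t : ℝ => Λ (t ^ α * x) / Λ (t ^ α)) atTop (nhds (x ^ β)))
    (h : ℝ → ℝ) (hhmeas : Measurable h) (hhnn : ∀ x, 0 ≤ h x)
    (hh1 : ∫ x in Set.Ioi (0 : ℝ), h x = 1) :
    Tendsto
      (fun t : ℝ => ∫ x in Set.Ioi (0 : ℝ),
        Complex.exp ((Λ (t ^ α * x) : ℂ) *
          (Complex.exp ((u : ℂ) / (Λ (t ^ α) : ℂ) * Complex.I) - 1)) * (h x : ℂ))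
      atTop
      (nhds (∫ x in Set.Ioi (0 : ℝ),
        Complex.exp ((u : ℂ) * ((x ^ β : ℝ) : ℂ) * Complex.I) * (h x : ℂ))) :=
  fnpp_charFun_scaling_limit_general α β u hα Λ hΛmeas hΛnn hΛtop hreg h hh1
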